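/- Under the SVP iteration with noiseless measurements and δ_{2k} < 1/3, after τ = ⌈log(‖b‖²/(2ε)) / log((1-δ_{2k})/(2δ_{2k}))⌉ iterations starting from X⁰ = 0, the iterate X^τ has rank at most k and satisfies ‖A(X^τ) - b‖² ≤ 2ε (equivalently ψ(X^τ) ≤ ε). -/
import Mathlib


open scoped BigOperators RealInnerProductSpace

/-- Squared Frobenius norm. -/
noncomputable def froSq {m n : ℕ} (X : Matrix (Fin m) (Fin n) ℝ) : ℝ :=
  ∑ i, ∑ j, (X i j) ^ 2

/-- Frobenius norm. -/
noncomputable def fro {m n : ℕ} (X : Matrix (Fin m) (Fin n) ℝ) : ℝ :=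
  Real.sqrt (froSq X)

/-- Trace (Frobenius) inner product. -/
noncomputable def frobInner {m n : ℕ} (X Y : Matrix (Fin m) (Fin n) ℝ) : ℝ :=
  ∑ i, ∑ j, X i j * Y i j

lemma froSq_nonneg {m n : ℕ} (X : Matrix (Fin m) (Fin n) ℝ) : 0 ≤ froSq X :=
  Finset.sum_nonneg fun _ _ => Finset.sum_nonneg fun _ _ => sq_nonneg _

lemma froSq_le_of_fro_le {m n : ℕ} {U V : Matrix (Fin m) (Fin n) ℝ}
    (h : fro U ≤ fro V) : froSq U ≤ froSq V := by
  have hU := froSq_nonneg U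
  have hV := froSq_nonneg V
  unfold fro at h
  calc froSq U = Real.sqrt (froSq U) ^ 2 := (Real.sq_sqrt hU).symm
    _ ≤ Real.sqrt (froSq V) ^ 2 := pow_le_pow_left₀ (Real.sqrt_nonneg _) h 2
    _ = froSq V := Real.sq_sqrt hV

lemma froSq_expand {m n : ℕ} (P G : Matrix (Fin m) (Fin n) ℝ) (c : ℝ) :
    froSq (P - c • G) = froSq P - 2 * c * frobInner G P + c ^ 2 * froSq G := by
  simp only [froSq, frobInner, Matrix.sub_apply, Matrix.smul_apply, smul_eq_mul,
    Finset.mul_sum, ← Finset.sum_sub_distrib, ← Finset.sum_add_distrib]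
  exact Finset.sum_congr rfl fun i _ => Finset.sum_congr rfl fun j _ => by ring

lemma rank_sub_le' {m n : ℕ} (A B : Matrix (Fin m) (Fin n) ℝ) :
    (A - B).rank ≤ A.rank + B.rank := by
  have hle : LinearMap.range (A - B).mulVecLin ≤
      LinearMap.range A.mulVecLin ⊔ LinearMap.range B.mulVecLin := by
    rintro x ⟨v, rfl⟩
    have hx : (A - B).mulVecLin v = A.mulVecLin v - B.mulVecLin v := by
      simp [Matrix.mulVecLin_apply, Matrix.sub_mulVec]
    rw [hx]
    exact Submodule.sub_mem _ (Submodule.mem_sup_left ⟨v, rfl⟩)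
      (Submodule.mem_sup_right ⟨v, rfl⟩)
  calc (A - B).rank
      ≤ Module.finrank ℝ ↥(LinearMap.range A.mulVecLin ⊔ LinearMap.range B.mulVecLin) :=
        Submodule.finrank_mono hle
    _ ≤ A.rank + B.rank := Submodule.finrank_add_le_finrank_add_finrank _ _

theorem svp_iteration_count {m n d k : ℕ} (δ : ℝ) (hδ0 : 0 < δ)
    (hδ : δ < 1 / 3)
    (A : Matrix (Fin m) (Fin n) ℝ →ₗ[ℝ] EuclideanSpace ℝ (Fin d))
    (AT : EuclideanSpace ℝ (Fin d) →ₗ[ℝ] Matrix (Fin m) (Fin n) ℝ)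
    (hAT : ∀ (X : Matrix (Fin m) (Fin n) ℝ) (v : EuclideanSpace ℝ (Fin d)),
      ⟪A X, v⟫ = frobInner (AT v) X)
    (hRIP : ∀ Z : Matrix (Fin m) (Fin n) ℝ, Z.rank ≤ 2 * k →
      (1 - δ) * froSq Z ≤ ‖A Z‖ ^ 2 ∧ ‖A Z‖ ^ 2 ≤ (1 + δ) * froSq Z)
    (Xstar : Matrix (Fin m) (Fin n) ℝ) (hstar : Xstar.rank ≤ k)
    (b : EuclideanSpace ℝ (Fin d)) (hb : b = A Xstar)
    (X : ℕ → Matrix (Fin m) (Fin n) ℝ) (hX0 : X 0 = 0)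
    (hrank : ∀ t, (X (t + 1)).rank ≤ k)
    (hproj : ∀ t, ∀ Z : Matrix (Fin m) (Fin n) ℝ, Z.rank ≤ k →
      fro (X t - (1 / (1 + δ)) • AT (A (X t) - b) - X (t + 1)) ≤
        fro (X t - (1 / (1 + δ)) • AT (A (X t) - b) - Z))
    (ε : ℝ) (hε : 0 < ε) :
    (X ⌈Real.log (‖b‖ ^ 2 / (2 * ε)) / Real.log ((1 - δ) / (2 * δ))⌉₊).rank ≤ k ∧
      ‖A (X ⌈Real.log (‖b‖ ^ 2 / (2 * ε)) / Real.log ((1 - δ) / (2 * δ))⌉₊) - b‖ ^ 2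
        ≤ 2 * ε := by
  have h1δ : (0:ℝ) < 1 - δ := by linarith
  have h1pδ : (0:ℝ) < 1 + δ := by linarith
  set ρ : ℝ := 2 * δ / (1 - δ) with hρdef
  have hρ0 : 0 < ρ := by positivity
  have hρ1 : ρ < 1 := by rw [hρdef, div_lt_one h1δ]; linarith
  have hrk : ∀ t, (X t).rank ≤ k := by
    intro t
    cases t with
    | zero => rw [hX0]; simp [Matrix.rank_zero]
    | succ t => exact hrank t
  have step : ∀ t, ‖A (X (t + 1)) - b‖ ^ 2 ≤ ρ * ‖A (X t) - b‖ ^ 2 := by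
    intro t
    have hΔr : (X t - X (t + 1)).rank ≤ 2 * k := by
      have h1 := hrk t; have h2 := hrank t
      have := rank_sub_le' (X t) (X (t + 1)); omega
    have hEr : (X t - Xstar).rank ≤ 2 * k := by
      have h1 := hrk t
      have := rank_sub_le' (X t) Xstar; omega
    have hp := froSq_le_of_fro_le (hproj t Xstar hstar)
    rw [sub_right_comm, sub_right_comm (X t) _ Xstar, froSq_expand, froSq_expand] at hp
    have hip1 : frobInner (AT (A (X t) - b)) (X t - X (t + 1)) =
        ⟪A (X t - X (t + 1)), A (X t) - b⟫ := (hAT _ _).symm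
    have hip2 : frobInner (AT (A (X t) - b)) (X t - Xstar) =
        ⟪A (X t - Xstar), A (X t) - b⟫ := (hAT _ _).symm
    have hAE : A (X t - Xstar) = A (X t) - b := by rw [map_sub, hb]
    have hrr : ⟪A (X t - Xstar), A (X t) - b⟫ = ‖A (X t) - b‖ ^ 2 := by
      rw [hAE, real_inner_self_eq_norm_sq]
    rw [hip1, hip2, hrr] at hp
    have hp' : froSq (X t - X (t + 1)) -
        2 * (1 / (1 + δ)) * ⟪A (X t - X (t + 1)), A (X t) - b⟫ ≤
        froSq (X t - Xstar) - 2 * (1 / (1 + δ)) * ‖A (X t) - b‖ ^ 2 := by linarith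
    have hp'' : (1 + δ) * froSq (X t - X (t + 1)) -
        2 * ⟪A (X t - X (t + 1)), A (X t) - b⟫ ≤
        (1 + δ) * froSq (X t - Xstar) - 2 * ‖A (X t) - b‖ ^ 2 := by
      calc (1 + δ) * froSq (X t - X (t + 1)) -
            2 * ⟪A (X t - X (t + 1)), A (X t) - b⟫
          = (1 + δ) * (froSq (X t - X (t + 1)) -
              2 * (1 / (1 + δ)) * ⟪A (X t - X (t + 1)), A (X t) - b⟫) := by
            field_simp
        _ ≤ (1 + δ) * (froSq (X t - Xstar) -
              2 * (1 / (1 + δ)) * ‖A (X t) - b‖ ^ 2) :=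
            mul_le_mul_of_nonneg_left hp' h1pδ.le
        _ = (1 + δ) * froSq (X t - Xstar) - 2 * ‖A (X t) - b‖ ^ 2 := by
            field_simp
    have hub := (hRIP _ hΔr).2
    have hlb := (hRIP _ hEr).1
    rw [hAE] at hlb
    have hAD : A (X (t + 1)) - b = (A (X t) - b) - A (X t - X (t + 1)) := by
      rw [map_sub]; abel
    have hnorm : ‖A (X (t + 1)) - b‖ ^ 2 = ‖A (X t) - b‖ ^ 2 -
        2 * ⟪A (X t) - b, A (X t - X (t + 1))⟫ + ‖A (X t - X (t + 1))‖ ^ 2 := by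
      rw [hAD, norm_sub_sq_real]
    have hsym : ⟪A (X t) - b, A (X t - X (t + 1))⟫ =
        ⟪A (X t - X (t + 1)), A (X t) - b⟫ := real_inner_comm _ _
    rw [hnorm, hsym, hρdef, div_mul_eq_mul_div, le_div_iff₀ h1δ]
    nlinarith [mul_le_mul_of_nonneg_left hlb h1pδ.le, hub, hp'',
      sq_nonneg ‖A (X t) - b‖]
  have geom : ∀ t, ‖A (X t) - b‖ ^ 2 ≤ ρ ^ t * ‖b‖ ^ 2 := by
    intro t
    induction t with
    | zero => simp [hX0]
    | succ t ih =>
      calc ‖A (X (t + 1)) - b‖ ^ 2 ≤ ρ * ‖A (X t) - b‖ ^ 2 := step t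
        _ ≤ ρ * (ρ ^ t * ‖b‖ ^ 2) := mul_le_mul_of_nonneg_left ih hρ0.le
        _ = ρ ^ (t + 1) * ‖b‖ ^ 2 := by ring
  set τ := ⌈Real.log (‖b‖ ^ 2 / (2 * ε)) / Real.log ((1 - δ) / (2 * δ))⌉₊ with hτdef
  refine ⟨hrk _, le_trans (geom τ) ?_⟩
  by_cases hbz : ‖b‖ = 0
  · rw [hbz]; simp; positivity
  · have hb0 : 0 < ‖b‖ := lt_of_le_of_ne (norm_nonneg b) (Ne.symm hbz)
    have hbsq : 0 < ‖b‖ ^ 2 := by positivity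
    have hL : 0 < Real.log ((1 - δ) / (2 * δ)) := by
      apply Real.log_pos
      rw [lt_div_iff₀ (by linarith : (0:ℝ) < 2 * δ)]; linarith
    have hτ : Real.log (‖b‖ ^ 2 / (2 * ε)) ≤ (τ : ℝ) * Real.log ((1 - δ) / (2 * δ)) := by
      have hle := Nat.le_ceil (Real.log (‖b‖ ^ 2 / (2 * ε)) / Real.log ((1 - δ) / (2 * δ)))
      calc Real.log (‖b‖ ^ 2 / (2 * ε))
          = Real.log (‖b‖ ^ 2 / (2 * ε)) / Real.log ((1 - δ) / (2 * δ)) *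
              Real.log ((1 - δ) / (2 * δ)) := (div_mul_cancel₀ _ hL.ne').symm
        _ ≤ (τ : ℝ) * Real.log ((1 - δ) / (2 * δ)) :=
            mul_le_mul_of_nonneg_right (by exact_mod_cast hle) hL.le
    have hinv : Real.log ((1 - δ) / (2 * δ)) = - Real.log ρ := by
      rw [← Real.log_inv, hρdef, inv_div]
    have hlog : Real.log (ρ ^ τ * ‖b‖ ^ 2) ≤ Real.log (2 * ε) := by
      rw [Real.log_mul (pow_ne_zero _ hρ0.ne') hbsq.ne', Real.log_pow]
      have hdiv : Real.log (‖b‖ ^ 2 / (2 * ε)) =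
          Real.log (‖b‖ ^ 2) - Real.log (2 * ε) :=
        Real.log_div hbsq.ne' (by positivity)
      rw [hdiv, hinv] at hτ
      linarith
    exact (Real.log_le_log_iff (by positivity) (by positivity)).mp hlog
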